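/- Let G be a graph on n vertices with maximum degree at most Δ ≥ 3, let λ > 0, and let Y be the size of an independent set drawn from the hard-core model on G at fugacity λ. If for every vertex v and every independent set J in the graph induced on vertices at distance ≥ 2 from a fixed 4-separated set S with |S| = s, the conditional distribution of Y decomposes as |J| plus a sum of s independent random variables each with P[X_j = 0] ≥ a and P[X_j = 1] ≥ bλ, then |E[e^{−itY}]| ≤ exp(−(ab λ/8)·s·t²/(1+λ)) for all t ∈ [−π, π]. -/

import Mathlib

open MeasureTheory ProbabilityTheory Real Complex
open scoped ProbabilityTheory

/-!
Conditioning on `J` writes `E[e^{-itY}]` as a convex combination of conditional characteristic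
functions, so it suffices to bound each of them. Conditionally, `Y` is a constant plus `s`
independent integer variables, so the characteristic function factors. A variable with atoms
`p₀` at `0` and `p₁` at `1` has `‖E[e^{-itX}]‖ ≤ 1 - p₀ p₁ (1 - cos t) ≤ exp (-p₀ p₁ (1 - cos t))`,
and `1 - cos t ≥ t² / 8` on `[-π, π]`.
-/

lemma norm_cexp_neg_I_mul_intCast (t : ℝ) (n : ℤ) : ‖exp (-(I * t * n))‖ = 1 := by
  rw [Complex.norm_exp]
  simp

lemma integrable_cexp_neg_I_mul_intCast {Ω : Type*} [MeasurableSpace Ω] (μ : Measure Ω)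
    [IsFiniteMeasure μ] (t : ℝ) {X : Ω → ℤ} (hX : Measurable X) :
    Integrable (fun ω => exp (-(I * t * X ω))) μ :=
  Integrable.of_bound
    ((measurable_from_top (f := fun n : ℤ => exp (-(I * t * n)))).comp hX).aestronglyMeasurable 1
    (.of_forall fun ω => (norm_cexp_neg_I_mul_intCast t (X ω)).le)

lemma ProbabilityTheory.iIndepFun.integral_cexp_sum {Ω κ : Type*} [MeasurableSpace Ω]
    [Fintype κ] {μ : Measure Ω} {X : κ → Ω → ℤ} (hind : iIndepFun X μ)
    (hX : ∀ j, Measurable (X j)) (t : ℝ) :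
    ∫ ω, exp (-(I * t * ((∑ j, X j ω : ℤ) : ℂ))) ∂μ
      = ∏ j, ∫ ω, exp (-(I * t * X j ω)) ∂μ := by
  have hexp :
      ∀ ω, exp (-(I * t * ((∑ j, X j ω : ℤ) : ℂ))) = ∏ j, exp (-(I * t * X j ω)) := fun ω => by
    rw [← Complex.exp_sum]
    push_cast
    rw [Finset.mul_sum, ← Finset.sum_neg_distrib]
  simp_rw [hexp]
  exact hind.integral_fun_prod_comp (fun j => (hX j).aemeasurable)
    fun _ => (measurable_from_top (f := fun n : ℤ => exp (-(I * t * n)))).aestronglyMeasurable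

lemma norm_add_mul_cexp_le {p q : ℝ} (hp : 0 ≤ p) (hq : 0 ≤ q) (hpq : p + q ≤ 1) (t : ℝ) :
    ‖(p : ℂ) + q * exp (-(I * t))‖ ≤ p + q - p * q * (1 - Real.cos t) := by
  set w := 1 - Real.cos t
  have hw0 : 0 ≤ w := by linarith [Real.cos_le_one t]
  have hw2 : w ≤ 2 := by linarith [Real.neg_one_le_cos t]
  have hnormSq :
      normSq ((p : ℂ) + q * exp (-(I * t))) = p ^ 2 + 2 * p * q * Real.cos t + q ^ 2 := by
    have hz : exp (-(I * t)) = exp ((-t : ℝ) * I) := by push_cast; ring_nf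
    rw [normSq_apply, hz]
    simp only [add_re, add_im, mul_re, mul_im, ofReal_re, ofReal_im, exp_ofReal_mul_I_re,
      exp_ofReal_mul_I_im, Real.cos_neg, Real.sin_neg]
    nlinarith [Real.sin_sq_add_cos_sq t]
  have hpqw : 0 ≤ p * q * w := by positivity
  have hrhs : 0 ≤ p + q - p * q * w := by nlinarith [sq_nonneg (p - q)]
  rw [Complex.norm_def, hnormSq, Real.sqrt_le_left hrhs, show Real.cos t = 1 - w by ring]
  -- `(p + q - p q w)² - ‖p + q e^{-it}‖² = p q w (p q w + 2 - 2 (p + q))`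
  nlinarith [mul_nonneg hpqw (show 0 ≤ p * q * w + 2 - 2 * (p + q) by linarith)]

lemma norm_integral_cexp_le_one_sub {Ω : Type*} [MeasurableSpace Ω] (μ : Measure Ω)
    [IsProbabilityMeasure μ] (t : ℝ) {X : Ω → ℤ} (hX : Measurable X) :
    ‖∫ ω, exp (-(I * t * X ω)) ∂μ‖
      ≤ 1 - μ.real {ω | X ω = 0} * μ.real {ω | X ω = 1} * (1 - Real.cos t) := by
  set A := {ω | X ω = 0}
  set B := {ω | X ω = 1}
  have hA : MeasurableSet A := hX (.singleton 0)
  have hB : MeasurableSet B := hX (.singleton 1)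
  have hAB : Disjoint A B := Set.disjoint_left.2 fun ω h0 h1 => by simp_all [A, B]
  have hF := integrable_cexp_neg_I_mul_intCast μ t hX
  have hintA : ∫ ω in A, exp (-(I * t * X ω)) ∂μ = μ.real A := by
    rw [setIntegral_congr_fun hA (g := fun _ => 1) fun ω (hω : X ω = 0) => by simp [hω],
      setIntegral_const, real_smul, mul_one]
  have hintB : ∫ ω in B, exp (-(I * t * X ω)) ∂μ = μ.real B * exp (-(I * t)) := by
    rw [setIntegral_congr_fun hB (g := fun _ => exp (-(I * t))) fun ω (hω : X ω = 1) => by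
      simp [hω], setIntegral_const, real_smul]
  have hrest :
      ‖∫ ω in (A ∪ B)ᶜ, exp (-(I * t * X ω)) ∂μ‖ ≤ 1 - (μ.real A + μ.real B) := by
    refine (norm_setIntegral_le_of_norm_le_const (measure_lt_top _ _)
      fun ω _ => (norm_cexp_neg_I_mul_intCast t (X ω)).le).trans_eq ?_
    rw [one_mul, probReal_compl_eq_one_sub (hA.union hB), measureReal_union hAB hB]
  have hmass : μ.real A + μ.real B ≤ 1 := by
    rw [← measureReal_union hAB hB]
    exact measureReal_le_one
  rw [← integral_add_compl (hA.union hB) hF, setIntegral_union hAB hB hF.integrableOn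
    hF.integrableOn, hintA, hintB]
  refine (norm_add_le _ _).trans ?_
  linarith [norm_add_mul_cexp_le measureReal_nonneg measureReal_nonneg hmass t]

lemma norm_integral_cexp_le_exp_of_iIndepFun {Ω κ : Type*} [MeasurableSpace Ω] [Fintype κ]
    {μ : Measure Ω} {X : κ → Ω → ℤ} (hind : iIndepFun X μ) (hX : ∀ j, Measurable (X j))
    {Y : Ω → ℤ} {c : ℤ} (hY : ∀ᵐ ω ∂μ, Y ω = c + ∑ j, X j ω) {q : ℝ}
    (hq : ∀ j, q ≤ μ.real {ω | X j ω = 0} * μ.real {ω | X j ω = 1}) (t : ℝ) :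
    ‖∫ ω, exp (-(I * t * Y ω)) ∂μ‖
      ≤ Real.exp (-(Fintype.card κ * q * (1 - Real.cos t))) := by
  have := hind.isProbabilityMeasure
  have hw : 0 ≤ 1 - Real.cos t := by linarith [Real.cos_le_one t]
  have hfactor :
      ∀ j, ‖∫ ω, exp (-(I * t * X j ω)) ∂μ‖ ≤ Real.exp (-(q * (1 - Real.cos t))) := fun j =>
    (norm_integral_cexp_le_one_sub μ t (hX j)).trans <| by
      nlinarith [Real.add_one_le_exp (-(q * (1 - Real.cos t))),
        mul_le_mul_of_nonneg_right (hq j) hw]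
  have hshift : ∫ ω, exp (-(I * t * Y ω)) ∂μ
      = exp (-(I * t * c)) * ∫ ω, exp (-(I * t * ((∑ j, X j ω : ℤ) : ℂ))) ∂μ := by
    rw [← integral_const_mul]
    refine integral_congr_ae (hY.mono fun ω hω => ?_)
    dsimp only
    rw [hω, ← Complex.exp_add]
    push_cast
    ring_nf
  rw [hshift, hind.integral_cexp_sum hX, norm_mul, norm_cexp_neg_I_mul_intCast, one_mul,
    norm_prod]
  calc ∏ j, ‖∫ ω, exp (-(I * t * X j ω)) ∂μ‖
        ≤ ∏ _j : κ, Real.exp (-(q * (1 - Real.cos t))) :=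
        Finset.prod_le_prod (fun _ _ => norm_nonneg _) fun j _ => hfactor j
    _ = Real.exp (-(Fintype.card κ * q * (1 - Real.cos t))) := by
        rw [Finset.prod_const, Finset.card_univ, ← Real.exp_nat_mul]
        ring_nf

lemma norm_integral_le_of_forall_cond_fiber {Ω α E : Type*} [MeasurableSpace Ω]
    [Fintype α] [MeasurableSpace α] [DiscreteMeasurableSpace α]
    [NormedAddCommGroup E] [NormedSpace ℝ E]
    {μ : Measure Ω} [IsProbabilityMeasure μ] {J : Ω → α} (hJ : Measurable J)
    {F : Ω → E} (hF : Integrable F μ) {C : ℝ}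
    (hC : ∀ x, μ (J ⁻¹' {x}) ≠ 0 → ‖∫ ω, F ω ∂μ[|J ← x]‖ ≤ C) :
    ‖∫ ω, F ω ∂μ‖ ≤ C := by
  have hint : ∀ x, Integrable F (μ (J ⁻¹' {x}) • μ[|J ← x]) := fun x => by
    by_cases h : μ (J ⁻¹' {x}) = 0
    · simp [h]
    · exact (hF.restrict.smul_measure (ENNReal.inv_ne_top.2 h)).smul_measure (measure_ne_top _ _)
  have hsplit :
      ∫ ω, F ω ∂μ = ∑ x, μ.real (J ⁻¹' {x}) • ∫ ω, F ω ∂μ[|J ← x] := by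
    conv_lhs => rw [← sum_meas_smul_cond_fiber hJ μ]
    rw [integral_finsetSum_measure fun x _ => hint x]
    simp only [integral_smul_measure, measureReal_def]
  have hmass : ∑ x, μ.real (J ⁻¹' {x}) = 1 := by
    rw [sum_measureReal_preimage_singleton _ fun x _ => hJ (.singleton x)]
    simp
  calc ‖∫ ω, F ω ∂μ‖
        ≤ ∑ x, μ.real (J ⁻¹' {x}) * ‖∫ ω, F ω ∂μ[|J ← x]‖ := by
        rw [hsplit]
        refine (norm_sum_le _ _).trans_eq ?_
        simp only [norm_smul, Real.norm_eq_abs, abs_of_nonneg measureReal_nonneg]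
    _ ≤ ∑ x, μ.real (J ⁻¹' {x}) * C := by
        refine Finset.sum_le_sum fun x _ => ?_
        by_cases h : μ (J ⁻¹' {x}) = 0
        · simp [measureReal_def, h]
        · exact mul_le_mul_of_nonneg_left (hC x h) measureReal_nonneg
    _ = C := by rw [← Finset.sum_mul, hmass, one_mul]

lemma sq_div_eight_le_one_sub_cos {t : ℝ} (ht : |t| ≤ π) : t ^ 2 / 8 ≤ 1 - Real.cos t := by
  have hπ : π ^ 2 ≤ 4 ^ 2 := pow_le_pow_left₀ pi_pos.le pi_le_four 2
  have : 1 / 8 ≤ 2 / π ^ 2 := by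
    rw [div_le_div_iff₀ (by norm_num) (by positivity)]
    linarith
  nlinarith [Real.cos_le_one_sub_mul_cos_sq ht, sq_nonneg t]

/-- High-phase bound for the hard-core model: if `Y` (the size of a hard-core independent set
at fugacity `λ` on a graph with a 4-separated set `S` of size `s`) decomposes, conditionally on
the configuration `J` away from `S`, as a constant plus a sum of `s` independent integer random
variables with `P[X_j = 0] ≥ a` and `P[X_j = 1] ≥ bλ`, then
`|E[e^{-itY}]| ≤ exp(-(abλ/8)·s·t²/(1+λ))` for all `t ∈ [-π, π]`. -/
theorem stmt7 {Ω : Type*} [MeasureSpace Ω] [IsProbabilityMeasure (ℙ : Measure Ω)]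
    {ι : Type*} [Fintype ι] [MeasurableSpace ι] [MeasurableSingletonClass ι]
    (J : Ω → ι) (hJ : Measurable J) (Y : Ω → ℤ) (hY : Measurable Y)
    (s : ℕ) (a b lam : ℝ) (ha : 0 < a) (hb : 0 < b) (hlam : 0 < lam)
    (hdecomp : ∀ i : ι, ℙ {ω | J ω = i} ≠ 0 →
      ∃ (c : ℤ) (X : Fin s → Ω → ℤ),
        (∀ j, Measurable (X j)) ∧
        iIndepFun X (ℙ[|{ω | J ω = i}]) ∧
        (∀ ω ∈ {ω | J ω = i}, Y ω = c + ∑ j, X j ω) ∧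
        (∀ j, a ≤ ((ℙ[|{ω | J ω = i}]) {ω | X j ω = 0}).toReal) ∧
        (∀ j, b * lam ≤ ((ℙ[|{ω | J ω = i}]) {ω | X j ω = 1}).toReal)) :
    ∀ t ∈ Set.Icc (-Real.pi) Real.pi,
      ‖∫ ω, Complex.exp (-(Complex.I * t * Y ω))‖
        ≤ Real.exp (-(a * b * lam / 8) * s * t ^ 2 / (1 + lam)) := by
  intro t ht
  have hcos : t ^ 2 / 8 ≤ 1 - Real.cos t := sq_div_eight_le_one_sub_cos (abs_le.2 ht)
  refine norm_integral_le_of_forall_cond_fiber hJ (integrable_cexp_neg_I_mul_intCast _ t hY)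
    fun i hi => ?_
  obtain ⟨c, X, hX, hind, hYX, hX0, hX1⟩ := hdecomp i hi
  have hq : ∀ j, a * (b * lam) ≤
      (ℙ[|J ← i]).real {ω | X j ω = 0} * (ℙ[|J ← i]).real {ω | X j ω = 1} :=
    fun j => mul_le_mul (hX0 j) (hX1 j) (by positivity) measureReal_nonneg
  refine (norm_integral_cexp_le_exp_of_iIndepFun hind hX
    (ae_cond_of_forall_mem (hJ (.singleton i)) hYX) hq t).trans (Real.exp_le_exp.2 ?_)
  have hshrink : t ^ 2 / 8 / (1 + lam) ≤ t ^ 2 / 8 := div_le_self (by positivity) (by linarith)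
  calc -(Fintype.card (Fin s) * (a * (b * lam)) * (1 - Real.cos t))
      ≤ -(a * b * lam * s * (t ^ 2 / 8 / (1 + lam))) := by
        rw [Fintype.card_fin, neg_le_neg_iff]
        nlinarith [mul_le_mul_of_nonneg_left (hshrink.trans hcos)
          (by positivity : 0 ≤ a * b * lam * s)]
    _ = -(a * b * lam / 8) * s * t ^ 2 / (1 + lam) := by ring
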